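/- Let n ≥ 2 and let G be a saturated tropical curve in the interior K° of the standard n-simplex K ⊂ ℝ^n, of degree d. Let z^{(1)}, …, z^{(l)} be the intersection points of the closure Ḡ with the facet of K contained in the hyperplane {x_1 + … + x_n = 1}, with multiplicities m^{(1)}, …, m^{(l)} (so m^{(1)} + … + m^{(l)} = d). Fix i ∈ {1, …, n} and ζ ∈ (0,1) such that no vertex of G has i-th coordinate equal to ζ and no z^{(k)} has i-th coordinate equal to ζ. Then Σ_e |w_e^i| = d − Σ_{k : z_i^{(k)} < ζ} m^{(k)}, where the left-hand sum runs over all edges e of G having points with i-th coordinate strictly less than ζ and points with i-th coordinate strictly greater than ζ, and z_i^{(k)} denotes the i-th coordinate of z^{(k)}. -/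

import Mathlib

open Set MeasureTheory
open scoped ENNReal NNReal Classical

noncomputable section

/-- Euclidean space `ℝ^n`. -/
abbrev Euc (n : ℕ) := EuclideanSpace ℝ (Fin n)

/-- The real vector in `ℝ^n` corresponding to an integer vector. -/
def intVec {n : ℕ} (w : Fin n → ℤ) : Euc n := WithLp.toLp 2 (fun i => (w i : ℝ))

/-- An edge of a tropical curve: its carrier set, its set of endpoints (lying in the
ambient open set), and a chosen integer representative of its weight
(the weight is really the class of `weight` up to sign). -/
structure TropEdge (n : ℕ) where
  carrier : Set (Euc n)
  ends : Finset (Euc n)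
  weight : Fin n → ℤ

namespace TropEdge

/-- The real vector corresponding to the chosen representative of the weight. -/
def wR {n : ℕ} (e : TropEdge n) : Euc n := intVec e.weight

/-- The multiplicity of an edge: the natural number `|k|` such that the weight is
`k` times a primitive integral vector, i.e. the gcd of its components. -/
def mult {n : ℕ} (e : TropEdge n) : ℕ :=
  Finset.univ.gcd fun i => (e.weight i).natAbs

end TropEdge

/-- The half-open segment/ray `{v + t • u : 0 ≤ t < T}`, where `T ∈ (0, ∞]`. -/
def rayTo {n : ℕ} (v u : Euc n) (T : ℝ≥0∞) : Set (Euc n) :=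
  {x | ∃ t : ℝ, 0 ≤ t ∧ ENNReal.ofReal t < T ∧ x = v + t • u}

/-- A tropical curve in an open subset `U ⊆ ℝ^n`: a finite vertex set, a finite edge
set, each edge an internal edge (a closed segment contained in `U` with two distinct
vertices as endpoints) or an unbounded edge (`{v + t • u : 0 ≤ t < T} ∩ U` whose
closure is not contained in `U`), with weights parallel to the edge directions;
distinct edges meet only in common vertices, every vertex lies on at least three
edges, and the balancing condition holds at every vertex. -/
structure TropicalCurve (n : ℕ) (U : Set (Euc n)) : Type where
  verts : Finset (Euc n)
  edges : Finset (TropEdge n)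
  verts_mem : ∀ v ∈ verts, v ∈ U
  weight_ne : ∀ e ∈ edges, e.weight ≠ 0
  edge_shape : ∀ e ∈ edges,
    (∃ a ∈ verts, ∃ b ∈ verts, a ≠ b ∧ e.ends = {a, b} ∧
      e.carrier = segment ℝ a b ∧ segment ℝ a b ⊆ U ∧
      ∃ c : ℝ, c ≠ 0 ∧ b - a = c • e.wR) ∨
    (∃ v ∈ verts, ∃ u : Euc n, u ≠ 0 ∧ ∃ T : ℝ≥0∞, 0 < T ∧
      e.ends = {v} ∧ e.carrier = rayTo v u T ∩ U ∧
      ¬ closure (rayTo v u T ∩ U) ⊆ U ∧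
      ∃ c : ℝ, c ≠ 0 ∧ u = c • e.wR)
  edges_meet : ∀ e ∈ edges, ∀ f ∈ edges, e ≠ f →
    ∀ x ∈ e.carrier ∩ f.carrier, x ∈ verts
  three_valent : ∀ v ∈ verts, 3 ≤ (edges.filter fun e => v ∈ e.ends).card
  balanced : ∀ v ∈ verts, ∃ ε : TropEdge n → ℤ,
    (∀ e ∈ edges, v ∈ e.ends →
      (ε e = 1 ∨ ε e = -1) ∧
      ∃ δ : ℝ, 0 < δ ∧ ∀ t : ℝ, 0 < t → t < δ →
        v + (t * (ε e : ℝ)) • e.wR ∈ e.carrier) ∧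
    ∑ e ∈ edges.filter (fun e => v ∈ e.ends), ε e • e.weight = 0

namespace TropicalCurve

variable {n : ℕ} {U : Set (Euc n)}

/-- The underlying set of a tropical curve: the union of the carriers of its edges. -/
def support (G : TropicalCurve n U) : Set (Euc n) :=
  ⋃ e ∈ G.edges, e.carrier

/-- The tropical area of the part of `G` lying in `W`:
`∑_e length(e ∩ W) · ‖w_e‖` (computed with the one-dimensional Hausdorff measure,
with values in `[0, ∞]`). -/
def areaOn (G : TropicalCurve n U) (W : Set (Euc n)) : ℝ≥0∞ :=
  ∑ e ∈ G.edges, μH[1] (e.carrier ∩ W) * (‖e.wR‖₊ : ℝ≥0∞)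

/-- The tropical area of `G`: `∑_e length(e) · ‖w_e‖`. -/
def area (G : TropicalCurve n U) : ℝ≥0∞ :=
  ∑ e ∈ G.edges, μH[1] e.carrier * (‖e.wR‖₊ : ℝ≥0∞)

end TropicalCurve

/-- The standard `n`-simplex: the convex hull of `0` and the standard basis vectors. -/
def stdSimp (n : ℕ) : Set (Euc n) :=
  convexHull ℝ (insert (0 : Euc n) {x | ∃ i : Fin n, x = EuclideanSpace.single i (1 : ℝ)})

/-- The `n+1` facets of the standard simplex: for `i < n` the facet in `{x_i = 0}`,
and for `i = n` the facet in `{x_1 + ⋯ + x_n = 1}`. -/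
def sFacet (n : ℕ) (i : Fin (n + 1)) : Set (Euc n) :=
  if h : (i : ℕ) < n then stdSimp n ∩ {x | x ⟨i, h⟩ = 0}
  else stdSimp n ∩ {x | ∑ j, x j = 1}

/-- The `(n-2)`-skeleton of the boundary of the standard simplex: the union of all
faces of dimension at most `n - 2`, i.e. of all pairwise intersections of facets. -/
def sSkel (n : ℕ) : Set (Euc n) :=
  ⋃ i : Fin (n + 1), ⋃ j : Fin (n + 1), ⋃ _ : i ≠ j, sFacet n i ∩ sFacet n j

/-- The inward integral normal direction of the `i`-th facet of the standard simplex. -/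
def sNormal (n : ℕ) (i : Fin (n + 1)) : Fin n → ℤ :=
  if h : (i : ℕ) < n then Pi.single ⟨i, h⟩ 1 else fun _ => 1

/-- A tropical curve in the interior of the standard simplex is saturated if its closure
avoids the `(n-2)`-skeleton of the boundary and meets the facets perpendicularly:
every edge whose closure meets a facet has weight parallel to the normal of that facet. -/
def Saturated {n : ℕ} (G : TropicalCurve n (interior (stdSimp n))) : Prop :=
  closure G.support ∩ sSkel n = ∅ ∧
  ∀ e ∈ G.edges, ∀ i : Fin (n + 1),
    (closure e.carrier ∩ sFacet n i).Nonempty →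
    ∃ k : ℤ, e.weight = k • sNormal n i

/-- The number of intersection points of the closure of `G` with the `i`-th facet of the
standard simplex, counted with the multiplicities of the corresponding edges. -/
def facetCount {n : ℕ} (G : TropicalCurve n (interior (stdSimp n)))
    (i : Fin (n + 1)) : ℕ :=
  ∑ e ∈ G.edges.filter (fun e => (closure e.carrier ∩ sFacet n i).Nonempty), e.mult

/-!
Sum the balancing condition, in the `i`-th coordinate, over the vertices above the level
`{xᵢ = ζ}` and regroup the sum by edges. The outgoing weights at the two ends of a bounded
edge are opposite, so they cancel unless the edge crosses the level, and then the upper end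
alone contributes `-|wₑⁱ|`. An unbounded edge ends at a point `q` of a facet to which its
weight is perpendicular. Its vertex contributes `-|wₑⁱ|` if the edge crosses the level, plus
`m` if `q` lies above the level on the facet `{x₁ + ⋯ + xₙ = 1}`; on the facet `{xᵢ = 0}` the
point `q` lies below the level, and on the other facets `wₑⁱ = 0`. Hence
`0 = ∑_{zᵢ⁽ᵏ⁾ > ζ} m⁽ᵏ⁾ - ∑_{e crossing} |wₑⁱ|`, and `∑ₖ m⁽ᵏ⁾ = d` because no two edges end at
the same point of that facet: they would overlap along a segment of vertices.
-/

section StdSimplex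

variable {n : ℕ}

lemma mem_stdSimp {x : Euc n} : x ∈ stdSimp n ↔ (∀ j, 0 ≤ x j) ∧ ∑ j, x j ≤ 1 := by
  constructor
  · intro hx
    refine convexHull_min (t := {x : Euc n | (∀ j, 0 ≤ x j) ∧ ∑ j, x j ≤ 1}) ?_ ?_ hx
    · rintro x (rfl | ⟨k, rfl⟩)
      · simp
      · simp [PiLp.single_apply, apply_ite]
    · intro x hx y hy a b ha hb hab
      refine ⟨fun j => ?_, ?_⟩
      · simp only [PiLp.add_apply, PiLp.smul_apply, smul_eq_mul]
        have := hx.1 j; have := hy.1 j; positivity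
      · simp only [PiLp.add_apply, PiLp.smul_apply, smul_eq_mul, Finset.sum_add_distrib,
          ← Finset.mul_sum]
        nlinarith [hx.2, hy.2]
  · rintro ⟨hx0, hx1⟩
    -- `x` is the convex combination `(1 - ∑ xⱼ) • 0 + ∑ xⱼ • eⱼ` of the vertices
    let w : Option (Fin n) → ℝ := fun o => o.elim (1 - ∑ j, x j) x
    let p : Option (Fin n) → Euc n := fun o => o.elim 0 (EuclideanSpace.single · 1)
    have hx : x = ∑ o, w o • p o := by
      ext k
      simp [w, p, Fintype.sum_option, Pi.single_apply]
    rw [hx]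
    refine (convex_convexHull ℝ _).sum_mem (fun o _ => ?_) ?_ (fun o _ => subset_convexHull ℝ _ ?_)
    · cases o <;> simp [w, hx0, hx1]
    · simp [w, Fintype.sum_option]
    · cases o with
      | none => exact mem_insert _ _
      | some j => exact mem_insert_of_mem _ ⟨j, rfl⟩

lemma convex_stdSimp : Convex ℝ (stdSimp n) := convex_convexHull ℝ _

lemma isClosed_stdSimp : IsClosed (stdSimp n) := by
  have hfin : {x : Euc n | ∃ j, x = EuclideanSpace.single j 1}.Finite :=
    (Set.finite_range fun j : Fin n => EuclideanSpace.single j (1 : ℝ)).subset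
      fun _ ⟨j, hj⟩ => ⟨j, hj.symm⟩
  exact (hfin.insert 0).isCompact_convexHull (𝕜 := ℝ) |>.isClosed

lemma ContinuousLinearMap.interior_preimage_of_ne_zero {E : Type*} [NormedAddCommGroup E]
    [NormedSpace ℝ E] {f : E →L[ℝ] ℝ} (hf : f ≠ 0) (s : Set ℝ) :
    interior (f ⁻¹' s) = f ⁻¹' interior s :=
  ((f.isOpenMap_of_ne_zero hf).preimage_interior_eq_interior_preimage f.continuous s).symm

lemma interior_stdSimp (hn : 0 < n) :
    interior (stdSimp n) = {x | (∀ j, 0 < x j) ∧ ∑ j, x j < 1} := by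
  let σ : Euc n →L[ℝ] ℝ := ∑ j, EuclideanSpace.proj j
  have hσ : ∀ x, σ x = ∑ j, x j := fun x => by simp [σ]
  have hK : stdSimp n = (⋂ j, EuclideanSpace.proj j ⁻¹' Ici 0) ∩ σ ⁻¹' Iic 1 := by
    ext x; simp [mem_stdSimp, hσ]
  have hproj (j : Fin n) : (EuclideanSpace.proj j : Euc n →L[ℝ] ℝ) ≠ 0 :=
    DFunLike.ne_iff.2 ⟨EuclideanSpace.single j 1, by simp⟩
  have hσ0 : σ ≠ 0 := DFunLike.ne_iff.2 ⟨EuclideanSpace.single ⟨0, hn⟩ 1, by simp [hσ]⟩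
  rw [hK, interior_inter, interior_iInter_of_finite,
    ContinuousLinearMap.interior_preimage_of_ne_zero hσ0]
  simp_rw [ContinuousLinearMap.interior_preimage_of_ne_zero (hproj _), interior_Ici, interior_Iic]
  ext x; simp [hσ]

lemma sFacet_castSucc (j : Fin n) : sFacet n j.castSucc = stdSimp n ∩ {x | x j = 0} := by
  simp [sFacet]

lemma sFacet_last : sFacet n (Fin.last n) = stdSimp n ∩ {x | ∑ j, x j = 1} := by
  simp [sFacet]

lemma sNormal_castSucc (j : Fin n) : sNormal n j.castSucc = Pi.single j 1 := by
  simp [sNormal]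

lemma sNormal_last : sNormal n (Fin.last n) = fun _ => 1 := by
  simp [sNormal]

lemma notMem_interior_of_mem_sFacet (hn : 0 < n) {j : Fin (n + 1)} {x : Euc n}
    (hx : x ∈ sFacet n j) : x ∉ interior (stdSimp n) := by
  rw [interior_stdSimp hn]
  rintro ⟨hpos, hsum⟩
  induction j using Fin.lastCases with
  | last => rw [sFacet_last] at hx; exact hsum.ne hx.2
  | cast j => rw [sFacet_castSucc] at hx; exact (hpos j).ne' hx.2

lemma mem_sFacet_of_notMem_interior (hn : 0 < n) {x : Euc n} (hx : x ∈ stdSimp n)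
    (hx' : x ∉ interior (stdSimp n)) :
    x ∈ sFacet n (Fin.last n) ∨ ∃ j : Fin n, x ∈ sFacet n j.castSucc := by
  rw [interior_stdSimp hn] at hx'
  rw [sFacet_last]
  simp only [sFacet_castSucc, mem_inter_iff, mem_ofPred_eq, hx, true_and]
  obtain ⟨hx0, hx1⟩ := mem_stdSimp.1 hx
  by_contra! h
  exact hx' ⟨fun j => (hx0 j).lt_of_ne' (h.2 j), hx1.lt_of_ne h.1⟩

lemma pos_of_sub_eq_smul_one (hn : 0 < n) {v p : Euc n} {a : ℝ}
    (hv : v ∈ interior (stdSimp n)) (hp : p ∈ sFacet n (Fin.last n))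
    (h : p - v = a • intVec (fun _ => 1)) : 0 < a := by
  rw [interior_stdSimp hn] at hv
  rw [sFacet_last] at hp
  have hsum := congrArg (fun x : Euc n => ∑ j, x j) h
  simp only [PiLp.sub_apply, Finset.sum_sub_distrib, intVec, Int.cast_one, PiLp.smul_apply,
    smul_eq_mul, mul_one, Finset.sum_const, Finset.card_univ, Fintype.card_fin,
    nsmul_eq_mul] at hsum
  have hv1 : ∑ j, v j < 1 := hv.2
  have hp1 : ∑ j, p j = 1 := hp.2
  have : (0 : ℝ) < n := by exact_mod_cast hn
  nlinarith

end StdSimplex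

lemma exists_pos_smul_eq_sub_of_add_smul_mem_segment {E : Type*} [AddCommGroup E] [Module ℝ E]
    {p o w : E} {t : ℝ} (ht : 0 < t) (hw : w ≠ 0) (h : p + t • w ∈ segment ℝ p o) :
    ∃ a : ℝ, 0 < a ∧ o - p = a • w := by
  rw [segment_eq_image'] at h
  obtain ⟨θ, ⟨hθ0, -⟩, hθ⟩ := h
  have hθw : θ • (o - p) = t • w := add_left_cancel hθ
  have hθ : 0 < θ := hθ0.lt_of_ne' fun h0 => by simp_all [ht.ne']
  refine ⟨t / θ, by positivity, ?_⟩
  rw [div_eq_inv_mul, mul_smul, ← hθw, smul_smul, inv_mul_cancel₀ hθ.ne', one_smul]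

lemma sub_smul_mem_image_lineMap_Ico {E : Type*} [AddCommGroup E] [Module ℝ E] {v p w : E}
    {a r : ℝ} (h : p - v = a • w) (hr : 0 < r) (hra : r ≤ a) :
    p - r • w ∈ AffineMap.lineMap v p '' Ico (0 : ℝ) 1 := by
  have ha : 0 < a := hr.trans_le hra
  refine ⟨1 - r / a, ⟨by linarith [(div_le_one ha).2 hra], by linarith [div_pos hr ha]⟩, ?_⟩
  rw [AffineMap.lineMap_apply_module', h, smul_smul, sub_mul, one_mul,
    div_mul_cancel₀ _ ha.ne', sub_smul, ← h]
  abel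

section Segments

variable {E : Type*} [NormedAddCommGroup E] [NormedSpace ℝ E]

lemma closure_image_lineMap_Ico (v q : E) :
    closure (AffineMap.lineMap v q '' Ico (0 : ℝ) 1) = segment ℝ v q := by
  have hcont : Continuous (AffineMap.lineMap v q : ℝ → E) := AffineMap.lineMap_continuous
  rw [segment_eq_image_lineMap]
  refine (closure_minimal (image_mono Ico_subset_Icc_self)
    (isCompact_Icc.image hcont).isClosed).antisymm ?_
  rw [← closure_Ico zero_ne_one]
  exact image_closure_subset_closure_image hcont

lemma closure_segment (v q : E) : closure (segment ℝ v q) = segment ℝ v q := by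
  rw [← closure_image_lineMap_Ico, closure_closure]

lemma segment_eq_insert_image_lineMap_Ico (v q : E) :
    segment ℝ v q = insert q (AffineMap.lineMap v q '' Ico (0 : ℝ) 1) := by
  rw [segment_eq_image_lineMap, ← Ico_insert_right zero_le_one, image_insert_eq,
    AffineMap.lineMap_apply_one]

end Segments

lemma flux_above_level {x y ζ a b : ℝ} {α β : ℤ} (hx : x ≠ ζ) (hy : y ≠ ζ) (ha : 0 < a)
    (hb : 0 < b) (hα : y - x = a * α) (hβ : x - y = b * β) (hαβ : α.natAbs = β.natAbs) :
    (if ζ < x then α else 0) + (if ζ < y then β else 0) =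
      -(if min x y < ζ ∧ ζ < max x y then (α.natAbs : ℤ) else 0) := by
  obtain rfl : β = -α := by
    rcases Int.natAbs_eq_natAbs_iff.1 hαβ with rfl | rfl
    · have : (a + b) * (α : ℝ) = 0 := by linarith
      simp_all [(add_pos ha hb).ne']
    · ring
  have hpos : x < y → 0 < α := fun h => by
    have : (0 : ℝ) < a * α := hα ▸ sub_pos.2 h
    exact_mod_cast pos_of_mul_pos_right this ha.le
  have hneg : y < x → α < 0 := fun h => by
    have : a * (α : ℝ) < 0 := hα ▸ sub_neg.2 h
    exact_mod_cast neg_of_mul_neg_right this ha.le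
  rcases hx.lt_or_gt with hx | hx <;> rcases hy.lt_or_gt with hy | hy
  · simp [hx.not_gt, hy.not_gt, hx, hy]
  · simp [hx.not_gt, hy, (hx.trans hy).le, hx, abs_of_pos (hpos (hx.trans hy))]
  · simp [hx, hy.not_gt, hy, abs_of_neg (hneg (hy.trans hx))]
  · simp [hx, hy, hx.not_gt, hy.not_gt]

section Coordinates

variable {n : ℕ}

lemma exists_mem_apply_iff_of_closure_eq_segment {C : Set (Euc n)} {p o : Euc n}
    (hC : closure C = segment ℝ p o) (i : Fin n) {P : ℝ → Prop} (hP : IsOpen {r | P r}) :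
    (∃ x ∈ C, P (x i)) ↔ ∃ r ∈ uIcc (p i) (o i), P r := by
  let π : Euc n →ᵃ[ℝ] ℝ := (EuclideanSpace.proj i : Euc n →L[ℝ] ℝ).toLinearMap.toAffineMap
  have hO : IsOpen (π ⁻¹' {r | P r}) := hP.preimage (EuclideanSpace.proj i).continuous
  have h := closure_inter_open_nonempty_iff (s := C) hO
  rw [hC] at h
  rw [← segment_eq_uIcc, ← show π p = p i from rfl, ← show π o = o i from rfl,
    ← image_segment, exists_mem_image]
  exact h.symm

lemma crosses_iff_of_closure_eq_segment {C : Set (Euc n)} {p o : Euc n}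
    (hC : closure C = segment ℝ p o) (i : Fin n) (ζ : ℝ) :
    ((∃ x ∈ C, x i < ζ) ∧ ∃ x ∈ C, ζ < x i) ↔ min (p i) (o i) < ζ ∧ ζ < max (p i) (o i) := by
  rw [exists_mem_apply_iff_of_closure_eq_segment hC i (P := (· < ζ)) isOpen_Iio,
    exists_mem_apply_iff_of_closure_eq_segment hC i (P := (ζ < ·)) isOpen_Ioi]
  constructor
  · rintro ⟨⟨r, hr, hrζ⟩, ⟨r', hr', hr'ζ⟩⟩
    exact ⟨hr.1.trans_lt hrζ, hr'ζ.trans_le hr'.2⟩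
  · rintro ⟨h1, h2⟩
    exact ⟨⟨_, ⟨le_rfl, inf_le_sup⟩, h1⟩, ⟨_, ⟨inf_le_sup, le_rfl⟩, h2⟩⟩

lemma closure_rayTo_subset {v u : Euc n} (hu : u ≠ 0) (T : ℝ≥0∞) :
    closure (rayTo v u T) ⊆ {x | ∃ s : ℝ, 0 ≤ s ∧ ENNReal.ofReal s ≤ T ∧ x = v + s • u} := by
  obtain ⟨j, hj⟩ : ∃ j, u j ≠ 0 := by
    by_contra! h
    exact hu (PiLp.ext h)
  -- `τ` reads off the ray parameter of a point of the line `v + ℝ • u`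
  let τ : Euc n → ℝ := fun x => (x j - v j) / u j
  have hτ (t : ℝ) : τ (v + t • u) = t := by simp [τ, hj]
  have hτc : Continuous τ := by fun_prop
  have hLc : IsClosed {x | x = v + τ x • u ∧ 0 ≤ τ x ∧ ENNReal.ofReal (τ x) ≤ T} :=
    (isClosed_eq continuous_id (by fun_prop)).inter
      ((isClosed_le continuous_const hτc).inter
        (isClosed_le (ENNReal.continuous_ofReal.comp hτc) continuous_const))
  refine (closure_minimal ?_ hLc).trans fun x ⟨hx, hx0, hxT⟩ => ⟨τ x, hx0, hxT, hx⟩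
  rintro _ ⟨t, ht0, htT, rfl⟩
  simp only [mem_ofPred_eq, hτ]
  exact ⟨trivial, ht0, htT.le⟩

lemma exists_rayTo_inter_eq_image_lineMap {U : Set (Euc n)} (hUo : IsOpen U)
    (hUc : Convex ℝ U) {v u : Euc n} {T : ℝ≥0∞} (hv : v ∈ U)
    (hcl : ¬ closure (rayTo v u T ∩ U) ⊆ U) :
    ∃ q ∉ U, ∃ s : ℝ, 0 < s ∧ q = v + s • u ∧
      rayTo v u T ∩ U = AffineMap.lineMap v q '' Ico (0 : ℝ) 1 := by
  obtain ⟨q, hqC, hqU⟩ := not_subset.1 hcl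
  have hu : u ≠ 0 := by
    rintro rfl
    refine hcl (closure_minimal ?_ isClosed_singleton |>.trans (singleton_subset_iff.2 hv))
    rintro _ ⟨⟨t, -, -, rfl⟩, -⟩
    simp
  obtain ⟨s, hs0, hsT, hqs⟩ := closure_rayTo_subset hu T (closure_mono inter_subset_left hqC)
  have hs : 0 < s := hs0.lt_of_ne' fun h => hqU (by rwa [hqs, h, zero_smul, add_zero])
  refine ⟨q, hqU, s, hs, hqs, Subset.antisymm ?_ ?_⟩
  · rintro _ ⟨⟨t, ht0, -, rfl⟩, hxU⟩
    have hts : t < s := by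
      by_contra! hst
      have ht : 0 < t := hs.trans_le hst
      refine hqU (hUc.segment_subset hv hxU ⟨1 - s / t, s / t, ?_, by positivity, by ring, ?_⟩)
      · linarith [(div_le_one ht).2 hst]
      · rw [hqs, smul_add, smul_smul, div_mul_cancel₀ _ ht.ne']; module
    refine ⟨t / s, ⟨by positivity, (div_lt_one hs).2 hts⟩, ?_⟩
    rw [AffineMap.lineMap_apply_module', hqs, add_sub_cancel_left, smul_smul,
      div_mul_cancel₀ _ hs.ne', add_comm]
  · rintro _ ⟨θ, ⟨hθ0, hθ1⟩, rfl⟩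
    refine ⟨⟨θ * s, by positivity, ?_, ?_⟩, ?_⟩
    · exact ((ENNReal.ofReal_lt_ofReal_iff hs).2 (by nlinarith)).trans_le hsT
    · rw [AffineMap.lineMap_apply_module', hqs, add_sub_cancel_left, smul_smul, add_comm]
    · rcases hθ0.eq_or_lt with rfl | hθ
      · rwa [AffineMap.lineMap_apply_zero]
      · rw [← hUo.interior_eq] at hv ⊢
        exact hUc.openSegment_interior_closure_subset_interior hv
          (closure_mono inter_subset_right hqC) (lineMap_mem_openSegment ℝ v q ⟨hθ, hθ1⟩)

end Coordinates

namespace TropEdge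

variable {n : ℕ} {e : TropEdge n} {i : Fin n} {ζ : ℝ}

lemma wR_apply (j : Fin n) : e.wR j = e.weight j := rfl

/-- `s • e.weight` is the representative `w̃ₑ` of the weight of `e` pointing away from `v`. -/
def IsOutwardSign (e : TropEdge n) (v : Euc n) (s : ℤ) : Prop :=
  (s = 1 ∨ s = -1) ∧ ∃ δ : ℝ, 0 < δ ∧ ∀ t : ℝ, 0 < t → t < δ →
    v + (t * (s : ℝ)) • e.wR ∈ e.carrier

lemma IsOutwardSign.exists_pos_smul {v o : Euc n} {s : ℤ}
    (h : e.IsOutwardSign v s) (hw : e.wR ≠ 0) (hC : e.carrier ⊆ segment ℝ v o) :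
    ∃ a : ℝ, 0 < a ∧ o - v = a • ((s : ℝ) • e.wR) := by
  obtain ⟨hs, δ, hδ, hmem⟩ := h
  have hs0 : (s : ℝ) ≠ 0 := by rcases hs with rfl | rfl <;> norm_num
  refine exists_pos_smul_eq_sub_of_add_smul_mem_segment (half_pos hδ) (smul_ne_zero hs0 hw) ?_
  rw [← mul_smul]
  exact hC (hmem _ (half_pos hδ) (half_lt_self hδ))

lemma IsOutwardSign.natAbs_mul {v : Euc n} {s : ℤ} (h : e.IsOutwardSign v s) (k : ℤ) :
    (s * k).natAbs = k.natAbs := by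
  rcases h.1 with rfl | rfl <;> simp

lemma mult_eq_natAbs_of_weight_eq_const (hn : 0 < n) {k : ℤ}
    (hk : e.weight = fun _ => k) : e.mult = k.natAbs := by
  simp only [TropEdge.mult, hk]
  exact Nat.dvd_antisymm (Finset.gcd_dvd (Finset.mem_univ ⟨0, hn⟩))
    (Finset.dvd_gcd fun _ _ => dvd_rfl)

lemma flux_of_segment {a b : Euc n} {ε : Euc n → ℤ} (hw : e.wR ≠ 0) (hab : a ≠ b)
    (hends : e.ends = {a, b}) (hcarr : e.carrier = segment ℝ a b) (ha : a i ≠ ζ)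
    (hb : b i ≠ ζ) (hε : ∀ v ∈ e.ends, e.IsOutwardSign v (ε v)) :
    ∑ v ∈ e.ends, (if ζ < v i then ε v * e.weight i else 0) =
      -(if (∃ x ∈ e.carrier, x i < ζ) ∧ ∃ x ∈ e.carrier, ζ < x i
        then ((e.weight i).natAbs : ℤ) else 0) := by
  have hεa := hε a (by simp [hends])
  have hεb := hε b (by simp [hends])
  obtain ⟨ca, hca, hba⟩ := hεa.exists_pos_smul hw hcarr.le
  obtain ⟨cb, hcb, hab'⟩ := hεb.exists_pos_smul hw (hcarr.trans (segment_symm ℝ a b)).le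
  simp only [crosses_iff_of_closure_eq_segment (show closure e.carrier = segment ℝ a b by
    rw [hcarr, closure_segment])]
  rw [hends, Finset.sum_pair hab, ← hεa.natAbs_mul]
  refine flux_above_level (α := ε a * e.weight i) (β := ε b * e.weight i) ha hb hca hcb ?_ ?_
    (by rw [hεa.natAbs_mul, hεb.natAbs_mul])
  · simpa [wR_apply] using congrArg (· i) hba
  · simpa [wR_apply] using congrArg (· i) hab'

lemma flux_of_ray {v q : Euc n} {ε : Euc n → ℤ} (hw : e.wR ≠ 0) (hends : e.ends = {v})
    (hcarr : e.carrier = AffineMap.lineMap v q '' Ico (0 : ℝ) 1) (hv : v i ≠ ζ) (hq : q i ≠ ζ)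
    (hε : e.IsOutwardSign v (ε v)) :
    ∑ x ∈ e.ends, (if ζ < x i then ε x * e.weight i else 0) =
      (if ζ < q i then ε v * e.weight i else 0) -
        (if (∃ x ∈ e.carrier, x i < ζ) ∧ ∃ x ∈ e.carrier, ζ < x i
          then ((e.weight i).natAbs : ℤ) else 0) := by
  have hcl : closure e.carrier = segment ℝ v q := hcarr ▸ closure_image_lineMap_Ico v q
  obtain ⟨a, ha, hqv⟩ := hε.exists_pos_smul hw (hcl ▸ subset_closure)
  have hqv_i : q i - v i = a * (ε v * e.weight i : ℤ) := by
    simpa [wR_apply] using congrArg (· i) hqv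
  have h := flux_above_level hv hq ha ha hqv_i (by push_cast at hqv_i ⊢; linarith)
    (Int.natAbs_neg _).symm
  simp only [crosses_iff_of_closure_eq_segment hcl]
  rw [← hε.natAbs_mul, hends, Finset.sum_singleton]
  split_ifs at h ⊢ <;> linarith

end TropEdge

namespace TropicalCurve

section

variable {n : ℕ} {U : Set (Euc n)} (G : TropicalCurve n U) {e : TropEdge n}

lemma ends_subset_verts (he : e ∈ G.edges) : e.ends ⊆ G.verts := by
  rcases G.edge_shape e he with ⟨a, ha, b, hb, -, hends, -⟩ | ⟨v, hv, -, -, -, -, hends, -⟩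
  · simp [hends, Finset.insert_subset_iff, ha, hb]
  · simp [hends, hv]

lemma carrier_subset (he : e ∈ G.edges) : e.carrier ⊆ U := by
  rcases G.edge_shape e he with
    ⟨_, _, _, _, _, _, hcarr, hsub, _⟩ | ⟨_, _, _, _, _, _, _, hcarr, _⟩
  · exact hcarr ▸ hsub
  · exact hcarr ▸ inter_subset_right

lemma carrier_subset_support (he : e ∈ G.edges) : e.carrier ⊆ G.support :=
  fun _ hx => mem_iUnion₂.2 ⟨e, he, hx⟩

lemma wR_ne_zero (he : e ∈ G.edges) : e.wR ≠ 0 := fun h =>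
  G.weight_ne e he (funext fun j => by simpa [TropEdge.wR, intVec] using congrArg (· j) h)

lemma carrier_eq_segment_or_image_lineMap (hUo : IsOpen U) (hUc : Convex ℝ U)
    (he : e ∈ G.edges) :
    (∃ a ∈ G.verts, ∃ b ∈ G.verts, a ≠ b ∧ e.ends = {a, b} ∧ e.carrier = segment ℝ a b) ∨
    (∃ v ∈ G.verts, ∃ q ∈ closure U \ U, ∃ c : ℝ, e.ends = {v} ∧
      e.carrier = AffineMap.lineMap v q '' Ico (0 : ℝ) 1 ∧ q - v = c • e.wR) := by
  rcases G.edge_shape e he with ⟨a, ha, b, hb, hab, hends, hcarr, -⟩ |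
    ⟨v, hv, u, -, T, -, hends, hcarr, hcl, c, -, hu⟩
  · exact Or.inl ⟨a, ha, b, hb, hab, hends, hcarr⟩
  · obtain ⟨q, hqU, s, -, hq, himg⟩ :=
      exists_rayTo_inter_eq_image_lineMap hUo hUc (G.verts_mem v hv) hcl
    have hqC : q ∈ closure e.carrier := by
      rw [hcarr, himg, closure_image_lineMap_Ico]
      exact right_mem_segment ℝ v q
    refine Or.inr ⟨v, hv, q, ⟨closure_mono (G.carrier_subset he) hqC, hqU⟩, s * c, hends,
      hcarr.trans himg, ?_⟩
    rw [hq, hu, mul_smul]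
    abel

lemma exists_closure_carrier_subset_insert (hUo : IsOpen U) (hUc : Convex ℝ U)
    (he : e ∈ G.edges) : ∃ q, closure e.carrier ⊆ insert q U := by
  rcases G.carrier_eq_segment_or_image_lineMap hUo hUc he with
    ⟨a, -, b, -, -, -, hcarr⟩ | ⟨v, -, q, -, -, -, hcarr, -⟩
  · refine ⟨a, ?_⟩
    rw [hcarr, closure_segment, ← hcarr]
    exact (G.carrier_subset he).trans (subset_insert a U)
  · refine ⟨q, ?_⟩
    rw [hcarr, closure_image_lineMap_Ico, segment_eq_insert_image_lineMap_Ico, ← hcarr]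
    exact insert_subset_insert (G.carrier_subset he)

lemma sum_sum_ends_eq_zero (ε : Euc n → TropEdge n → ℤ)
    (hε : ∀ v ∈ G.verts, ∑ e ∈ G.edges.filter (fun e => v ∈ e.ends), ε v e • e.weight = 0)
    (P : Euc n → Prop) [DecidablePred P] (i : Fin n) :
    ∑ e ∈ G.edges, ∑ v ∈ e.ends, (if P v then ε v e * e.weight i else 0) = 0 := by
  calc ∑ e ∈ G.edges, ∑ v ∈ e.ends, (if P v then ε v e * e.weight i else 0)
      = ∑ e ∈ G.edges, ∑ v ∈ G.verts,
          if v ∈ e.ends then (if P v then ε v e * e.weight i else 0) else 0 := by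
        refine Finset.sum_congr rfl fun e he => ?_
        rw [Finset.sum_ite_mem, Finset.inter_eq_right.2 (G.ends_subset_verts he)]
    _ = ∑ v ∈ G.verts, if P v then (∑ e ∈ G.edges.filter (fun e => v ∈ e.ends),
          ε v e • e.weight) i else 0 := by
        rw [Finset.sum_comm]
        refine Finset.sum_congr rfl fun v _ => ?_
        split_ifs <;> simp [Finset.sum_filter, Finset.sum_apply, *]
    _ = 0 := Finset.sum_eq_zero fun v hv => by rw [hε v hv]; simp

end

variable {n : ℕ} {G : TropicalCurve n (interior (stdSimp n))} {e : TropEdge n}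

lemma subsingleton_closure_inter_sFacet (hn : 0 < n) (he : e ∈ G.edges) (j : Fin (n + 1)) :
    (closure e.carrier ∩ sFacet n j).Subsingleton := by
  obtain ⟨q, hq⟩ :=
    G.exists_closure_carrier_subset_insert isOpen_interior convex_stdSimp.interior he
  refine (subsingleton_singleton (a := q)).anti fun x ⟨hx, hxj⟩ => ?_
  exact (hq hx).resolve_right (notMem_interior_of_mem_sFacet hn hxj)

lemma exists_image_lineMap_of_mem_sFacet_last (hn : 0 < n) (hG : Saturated G)
    (he : e ∈ G.edges) {p : Euc n} (hp : p ∈ closure e.carrier)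
    (hpf : p ∈ sFacet n (Fin.last n)) :
    ∃ v : Euc n, ∃ a : ℝ, 0 < a ∧ p - v = a • intVec (fun _ => 1) ∧
      e.carrier = AffineMap.lineMap v p '' Ico (0 : ℝ) 1 := by
  have hpU := notMem_interior_of_mem_sFacet hn hpf
  rcases G.carrier_eq_segment_or_image_lineMap isOpen_interior convex_stdSimp.interior he with
    ⟨a, -, b, -, -, -, hcarr⟩ | ⟨v, hv, q, -, c, -, hcarr, hqv⟩
  · rw [hcarr, closure_segment, ← hcarr] at hp
    exact absurd (G.carrier_subset he hp) hpU
  · obtain rfl : p = q := by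
      rw [hcarr, closure_image_lineMap_Ico, segment_eq_insert_image_lineMap_Ico, ← hcarr] at hp
      exact hp.resolve_right fun h => hpU (G.carrier_subset he h)
    obtain ⟨k, hk⟩ := hG.2 e he _ ⟨p, hp, hpf⟩
    have hw : e.wR = (k : ℝ) • intVec (fun _ => 1) := by
      ext j; simp [TropEdge.wR, intVec, hk, sNormal_last]
    rw [hw, smul_smul] at hqv
    exact ⟨v, c * k, pos_of_sub_eq_smul_one hn (G.verts_mem v hv) hpf hqv, hqv, hcarr⟩

lemma eq_of_mem_closure_of_mem_sFacet_last (hn : 0 < n) (hG : Saturated G) {f : TropEdge n}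
    (he : e ∈ G.edges) (hf : f ∈ G.edges) {p : Euc n} (hpe : p ∈ closure e.carrier)
    (hpf : p ∈ closure f.carrier) (hp : p ∈ sFacet n (Fin.last n)) : e = f := by
  by_contra hef
  obtain ⟨v, a, ha, hpv, hcarr⟩ := G.exists_image_lineMap_of_mem_sFacet_last hn hG he hpe hp
  obtain ⟨v', a', ha', hpv', hcarr'⟩ := G.exists_image_lineMap_of_mem_sFacet_last hn hG hf hpf hp
  have h1 : intVec (fun _ : Fin n => (1 : ℤ)) ≠ 0 := fun h => by
    simpa [intVec] using congrArg (· ⟨0, hn⟩) h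
  -- both edges run into `p` along the direction `(1, …, 1)`, so they share a whole segment
  have hsub : (fun r : ℝ => p - r • intVec (fun _ => 1)) '' Ioo 0 (min a a') ⊆ G.verts := by
    rintro _ ⟨r, ⟨hr0, hr⟩, rfl⟩
    refine G.edges_meet e he f hf hef _ ⟨?_, ?_⟩
    · rw [hcarr]; exact sub_smul_mem_image_lineMap_Ico hpv hr0 (hr.le.trans (min_le_left _ _))
    · rw [hcarr']; exact sub_smul_mem_image_lineMap_Ico hpv' hr0 (hr.le.trans (min_le_right _ _))
  refine ((Ioo_infinite (lt_min ha ha')).image fun r _ r' _ h => ?_)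
    (G.verts.finite_toSet.subset hsub)
  exact smul_left_injective ℝ h1 (sub_right_injective h)

lemma sum_filter_mem_eq_sum_mult (hn : 0 < n) (hG : Saturated G) {l : ℕ} {z : Fin l → Euc n}
    {m : Fin l → ℕ} (hzinj : Function.Injective z)
    (hzrange : closure G.support ∩ sFacet n (Fin.last n) = Set.range z)
    (hm : ∀ k : Fin l, ∀ e ∈ G.edges, z k ∈ closure e.carrier → m k = e.mult)
    (W : Set (Euc n)) :
    ∑ k ∈ Finset.univ.filter (fun k => z k ∈ W), m k =
      ∑ e ∈ G.edges.filter (fun e => (closure e.carrier ∩ sFacet n (Fin.last n) ∩ W).Nonempty),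
        e.mult := by
  have hz (k : Fin l) : z k ∈ closure G.support ∩ sFacet n (Fin.last n) :=
    hzrange ▸ mem_range_self k
  have hcl : closure G.support = ⋃ e ∈ G.edges, closure e.carrier :=
    Finset.closure_biUnion _ _
  choose! κ hκ hzκ using fun k => (by simpa [hcl] using (hz k).1 :
    ∃ e ∈ G.edges, z k ∈ closure e.carrier)
  refine Finset.sum_nbij κ (fun k hk => ?_) (fun k _ k' _ h => ?_) (fun e he => ?_)
    (fun k _ => hm k _ (hκ k) (hzκ k))
  · simp only [Finset.mem_filter, Finset.mem_univ, true_and] at hk ⊢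
    exact ⟨hκ k, z k, ⟨hzκ k, (hz k).2⟩, hk⟩
  · exact hzinj (G.subsingleton_closure_inter_sFacet hn (hκ k) _ ⟨hzκ k, (hz k).2⟩
      ⟨h ▸ hzκ k', (hz k').2⟩)
  · simp only [Finset.coe_filter, mem_ofPred_eq] at he
    obtain ⟨he, x, ⟨hxe, hxf⟩, hxW⟩ := he
    have hx : x ∈ closure G.support ∩ sFacet n (Fin.last n) :=
      ⟨closure_mono (G.carrier_subset_support he) hxe, hxf⟩
    rw [hzrange] at hx
    obtain ⟨k, rfl⟩ := hx
    exact ⟨k, by simpa using hxW,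
      G.eq_of_mem_closure_of_mem_sFacet_last hn hG (hκ k) he (hzκ k) hxe hxf⟩

lemma outward_weight_eq_mult (hn : 0 < n) (hG : Saturated G) (he : e ∈ G.edges)
    {v q : Euc n} (hv : v ∈ interior (stdSimp n)) (hqC : q ∈ closure e.carrier)
    (hqf : q ∈ sFacet n (Fin.last n)) {s : ℤ} (hs : e.IsOutwardSign v s) {a : ℝ} (ha : 0 < a)
    (hqv : q - v = a • ((s : ℝ) • e.wR)) (i : Fin n) : s * e.weight i = e.mult := by
  obtain ⟨k, hk⟩ := hG.2 e he _ ⟨q, hqC, hqf⟩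
  rw [sNormal_last] at hk
  have hqv' : q - v = (a * (s * k)) • intVec (fun _ => 1) := by
    rw [hqv]; ext j; simp [TropEdge.wR, intVec, hk]
  have hsk : 0 < s * k := by
    have := pos_of_sub_eq_smul_one hn hv hqf hqv'
    exact_mod_cast pos_of_mul_pos_right this ha.le
  rw [TropEdge.mult_eq_natAbs_of_weight_eq_const hn (k := k) (funext fun j => by simp [hk]),
    ← hs.natAbs_mul, Int.natCast_natAbs, abs_of_pos hsk, hk]
  simp

lemma boundary_flux_eq (hn : 0 < n) (hG : Saturated G) (he : e ∈ G.edges) {v q : Euc n}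
    (hv : v ∈ G.verts) (hcarr : e.carrier = AffineMap.lineMap v q '' Ico (0 : ℝ) 1)
    (hq : q ∈ closure (interior (stdSimp n)) \ interior (stdSimp n)) {s : ℤ}
    (hs : e.IsOutwardSign v s) {i : Fin n} {ζ : ℝ} (hζ0 : 0 < ζ) (hvζ : v i ≠ ζ)
    (hqζ : ∀ x ∈ closure e.carrier ∩ sFacet n (Fin.last n), x i ≠ ζ) :
    q i ≠ ζ ∧ (if ζ < q i then s * e.weight i else 0) =
      if (closure e.carrier ∩ sFacet n (Fin.last n) ∩ {x | ζ < x i}).Nonempty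
        then (e.mult : ℤ) else 0 := by
  have hcl : closure e.carrier = segment ℝ v q := hcarr ▸ closure_image_lineMap_Ico v q
  have hqC : q ∈ closure e.carrier := hcl ▸ right_mem_segment ℝ v q
  obtain ⟨a, ha, hqv⟩ := hs.exists_pos_smul (G.wR_ne_zero he) (hcl ▸ subset_closure)
  have hfar : (closure e.carrier ∩ sFacet n (Fin.last n) ∩ {x | ζ < x i}).Nonempty ↔
      q ∈ sFacet n (Fin.last n) ∧ ζ < q i := by
    refine ⟨fun ⟨x, ⟨hx, hxf⟩, hxζ⟩ => ?_, fun ⟨hqf, hqi⟩ => ⟨q, ⟨hqC, hqf⟩, hqi⟩⟩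
    rw [hcl, segment_eq_insert_image_lineMap_Ico, ← hcarr] at hx
    obtain rfl := hx.resolve_right fun h =>
      notMem_interior_of_mem_sFacet hn hxf (G.carrier_subset he h)
    exact ⟨hxf, hxζ⟩
  simp only [hfar]
  by_cases hqf : q ∈ sFacet n (Fin.last n)
  · refine ⟨hqζ q ⟨hqC, hqf⟩, ?_⟩
    simp [hqf, outward_weight_eq_mult hn hG he (G.verts_mem v hv) hqC hqf hs ha hqv i]
  · obtain ⟨j, hj⟩ := (mem_sFacet_of_notMem_interior hn
      (closure_minimal interior_subset isClosed_stdSimp hq.1) hq.2).resolve_left hqf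
    obtain ⟨k, hk⟩ := hG.2 e he _ ⟨q, hqC, hj⟩
    rw [sNormal_castSucc] at hk
    rw [sFacet_castSucc] at hj
    simp only [hqf, false_and, if_false]
    by_cases hij : i = j
    · subst hij
      have hqi : q i < ζ := hj.2 ▸ hζ0
      exact ⟨hqi.ne, if_neg hqi.not_gt⟩
    · have hwi : e.weight i = 0 := by simp [hk, hij]
      have hqi : q i = v i := by
        simpa [TropEdge.wR_apply, hwi, sub_eq_zero] using congrArg (· i) hqv
      exact ⟨hqi ▸ hvζ, by simp [hwi]⟩

lemma edge_flux (hn : 0 < n) (hG : Saturated G) (he : e ∈ G.edges) {i : Fin n} {ζ : ℝ}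
    (hζ0 : 0 < ζ) (hζv : ∀ v ∈ G.verts, v i ≠ ζ)
    (hζz : ∀ x ∈ closure e.carrier ∩ sFacet n (Fin.last n), x i ≠ ζ) {ε : Euc n → ℤ}
    (hε : ∀ v ∈ e.ends, e.IsOutwardSign v (ε v)) :
    ∑ v ∈ e.ends, (if ζ < v i then ε v * e.weight i else 0) =
      (if (closure e.carrier ∩ sFacet n (Fin.last n) ∩ {x | ζ < x i}).Nonempty
        then (e.mult : ℤ) else 0) -
      (if (∃ x ∈ e.carrier, x i < ζ) ∧ ∃ x ∈ e.carrier, ζ < x i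
        then ((e.weight i).natAbs : ℤ) else 0) := by
  rcases G.carrier_eq_segment_or_image_lineMap isOpen_interior convex_stdSimp.interior he with
    ⟨a, ha, b, hb, hab, hends, hcarr⟩ | ⟨v, hv, q, hq, -, hends, hcarr, -⟩
  · have hfar : ¬ (closure e.carrier ∩ sFacet n (Fin.last n) ∩ {x | ζ < x i}).Nonempty := by
      rintro ⟨x, ⟨hx, hxf⟩, -⟩
      rw [hcarr, closure_segment, ← hcarr] at hx
      exact notMem_interior_of_mem_sFacet hn hxf (G.carrier_subset he hx)
    rw [TropEdge.flux_of_segment (G.wR_ne_zero he) hab hends hcarr (hζv a ha) (hζv b hb) hε,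
      if_neg hfar, zero_sub]
  · have hεv := hε v (by simp [hends])
    obtain ⟨hqζ, hterm⟩ := boundary_flux_eq hn hG he hv hcarr hq hεv hζ0 (hζv v hv) hζz
    rw [TropEdge.flux_of_ray (G.wR_ne_zero he) hends hcarr (hζv v hv) hqζ hεv, hterm]

end TropicalCurve

theorem density_lemma_general (n : ℕ) (hn : 2 ≤ n) (d : ℕ) (i : Fin n) (ζ : ℝ)
    (G : TropicalCurve n (interior (stdSimp n))) (hG : Saturated G)
    (hd : ∀ j : Fin (n + 1), facetCount G j = d)
    (l : ℕ) (z : Fin l → Euc n) (m : Fin l → ℕ)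
    (hzinj : Function.Injective z)
    (hzrange : closure G.support ∩ sFacet n (Fin.last n) = Set.range z)
    (hm : ∀ k : Fin l, ∀ e ∈ G.edges, z k ∈ closure e.carrier → m k = e.mult)
    (hζ0 : 0 < ζ)
    (hζv : ∀ v ∈ G.verts, v i ≠ ζ)
    (hζz : ∀ k : Fin l, z k i ≠ ζ) :
    (∑ e ∈ G.edges.filter (fun e =>
        (∃ x ∈ e.carrier, x i < ζ) ∧ ∃ x ∈ e.carrier, ζ < x i),
      ((e.weight i).natAbs : ℤ)) =
    (d : ℤ) - ∑ k ∈ Finset.univ.filter (fun k : Fin l => z k i < ζ), (m k : ℤ) := by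
  have hn0 : 0 < n := by omega
  choose! ε hε using G.balanced
  have hζe : ∀ e ∈ G.edges, ∀ x ∈ closure e.carrier ∩ sFacet n (Fin.last n), x i ≠ ζ := by
    rintro e he x ⟨hx, hxf⟩
    have hx' : x ∈ closure G.support ∩ sFacet n (Fin.last n) :=
      ⟨closure_mono (G.carrier_subset_support he) hx, hxf⟩
    rw [hzrange] at hx'
    obtain ⟨k, rfl⟩ := hx'
    exact hζz k
  have hflux := Finset.sum_congr rfl fun e he =>
    G.edge_flux hn0 hG he hζ0 hζv (hζe e he) fun v hv =>
      (hε v (G.ends_subset_verts he hv)).1 e he hv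
  rw [G.sum_sum_ends_eq_zero ε (fun v hv => (hε v hv).2) (fun v => ζ < v i) i,
    Finset.sum_sub_distrib, ← Finset.sum_filter, ← Finset.sum_filter] at hflux
  have habove := G.sum_filter_mem_eq_sum_mult hn0 hG hzinj hzrange hm {x | ζ < x i}
  have hall := G.sum_filter_mem_eq_sum_mult hn0 hG hzinj hzrange hm univ
  simp only [mem_univ, Finset.filter_true, inter_univ] at hall
  rw [← facetCount, hd] at hall
  have hbelow : Finset.univ.filter (fun k => ¬ ζ < z k i) =
      Finset.univ.filter (fun k : Fin l => z k i < ζ) :=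
    Finset.filter_congr fun k _ => not_lt.trans (le_iff_lt_or_eq.trans (or_iff_left (hζz k)))
  have hsplit := Finset.sum_filter_add_sum_filter_not Finset.univ (fun k => ζ < z k i) m
  rw [hbelow, hall] at hsplit
  simp only [mem_ofPred_eq] at habove
  zify at habove hsplit
  linarith

/-- for a saturated tropical curve of degree d in the interior of the
standard simplex with intersection points z⁽¹⁾, …, z⁽ˡ⁾ (of multiplicities
m⁽¹⁾, …, m⁽ˡ⁾) with the facet in {x₁ + ⋯ + xₙ = 1}, and for a level ζ ∈ (0,1) avoiding
the i-th coordinates of all vertices and all z⁽ᵏ⁾, the sum of |wₑⁱ| over the edges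
crossing the hyperplane {xᵢ = ζ} equals d minus the sum of the multiplicities m⁽ᵏ⁾ with
zᵢ⁽ᵏ⁾ < ζ. -/
theorem density_lemma (n : ℕ) (hn : 2 ≤ n) (d : ℕ) (i : Fin n) (ζ : ℝ)
    (G : TropicalCurve n (interior (stdSimp n))) (hG : Saturated G)
    (hd : ∀ j : Fin (n + 1), facetCount G j = d)
    (l : ℕ) (z : Fin l → Euc n) (m : Fin l → ℕ)
    (hzinj : Function.Injective z)
    (hzrange : closure G.support ∩ sFacet n (Fin.last n) = Set.range z)
    (hm : ∀ k : Fin l, ∀ e ∈ G.edges, z k ∈ closure e.carrier → m k = e.mult)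
    (hζ0 : 0 < ζ) (hζ1 : ζ < 1)
    (hζv : ∀ v ∈ G.verts, v i ≠ ζ)
    (hζz : ∀ k : Fin l, z k i ≠ ζ) :
    (∑ e ∈ G.edges.filter (fun e =>
        (∃ x ∈ e.carrier, x i < ζ) ∧ ∃ x ∈ e.carrier, ζ < x i),
      ((e.weight i).natAbs : ℤ)) =
    (d : ℤ) - ∑ k ∈ Finset.univ.filter (fun k : Fin l => z k i < ζ), (m k : ℤ) :=
  density_lemma_general n hn d i ζ G hG hd l z m hzinj hzrange hm hζ0 hζv hζz
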